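/- Let k be a field and O = k[[t^3,t^5]]. For all a, b ∈ k, the ideal I = (t^3 + a t^5 + b t^{10}, t^6 − a² t^{10}) of O has gap sequence G(I) = {0,5,10}, i.e. Γ(I) = {3+γ : γ ∈ Γ}. -/

import Mathlib

/-!
Every element of `k[t³, t⁵]` has its support in `Γ = ⟨3, 5⟩`, so a nonzero
`f = g F₁ + h F₂ ∈ I` (`F₁`, `F₂` the two generators) has order `n ∈ Γ`, and `n ≥ 3`
because `t³` divides `F₁` and `F₂`.
Since the coefficients of `g` and `h` vanish on the gaps `1, 2, 4, 7`, the coefficients of `f`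
satisfy `f₅ = a f₃` and `f₁₀ = a f₈ - a² f₆ + b f₃`, which rules out `n = 5` and `n = 10`;
hence `n - 3 ∈ Γ`. Conversely `t^γ F₁ ∈ I` has order `3 + γ` for every `γ ∈ Γ`.
-/

namespace PowerSeries

variable (R : Type*) [CommSemiring R]

def supportedIn (M : AddSubmonoid ℕ) : Subalgebra R R⟦X⟧ where
  carrier := {p | ∀ n ∉ M, coeff n p = 0}
  mul_mem' {p q} hp hq n hn := by
    rw [coeff_mul]
    refine Finset.sum_eq_zero fun x hx => ?_
    have hx : x.1 + x.2 = n := Finset.HasAntidiagonal.mem_antidiagonal.mp hx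
    by_cases hx1 : x.1 ∈ M
    · have hx2 : x.2 ∉ M := fun hx2 => hn (hx ▸ add_mem hx1 hx2)
      rw [hq _ hx2, mul_zero]
    · rw [hp _ hx1, zero_mul]
  add_mem' {p q} hp hq n hn := by rw [map_add, hp n hn, hq n hn, add_zero]
  algebraMap_mem' r n hn := by
    rw [algebraMap_apply, Algebra.algebraMap_self, RingHom.id_apply, coeff_C,
      if_neg (by rintro rfl; exact hn M.zero_mem)]

variable {R}

theorem mem_supportedIn {M : AddSubmonoid ℕ} {p : R⟦X⟧} :
    p ∈ supportedIn R M ↔ ∀ n ∉ M, coeff n p = 0 :=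
  Iff.rfl

theorem X_pow_mem_adjoin {S : Set ℕ} {n : ℕ} (hn : n ∈ AddSubmonoid.closure S) :
    (X : R⟦X⟧) ^ n ∈ Algebra.adjoin R ((X ^ ·) '' S) := by
  induction hn using AddSubmonoid.closure_induction with
  | mem i hi => exact Algebra.subset_adjoin ⟨i, hi, rfl⟩
  | zero => exact pow_zero (X : R⟦X⟧) ▸ one_mem _
  | add i j _ _ hi hj => exact pow_add (X : R⟦X⟧) i j ▸ mul_mem hi hj

theorem adjoin_X_pow_le_supportedIn (S : Set ℕ) :
    Algebra.adjoin R ((X ^ ·) '' S) ≤ supportedIn R (AddSubmonoid.closure S) := by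
  refine Algebra.adjoin_le ?_
  rintro _ ⟨i, hi, rfl⟩ n hn
  rw [coeff_X_pow, if_neg (by rintro rfl; exact hn (AddSubmonoid.subset_closure hi))]

end PowerSeries

theorem exists_three_mul_add_five_mul_iff (m : ℕ) :
    (∃ a b : ℕ, m = 3 * a + 5 * b) ↔ m ≠ 1 ∧ m ≠ 2 ∧ m ≠ 4 ∧ m ≠ 7 := by
  refine ⟨fun ⟨a, b, hm⟩ => by omega, fun _ => ?_⟩
  rcases (by omega : m % 3 = 0 ∨ m % 3 = 1 ∨ m % 3 = 2) with h | h | h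
  · exact ⟨m / 3, 0, by omega⟩
  · exact ⟨(m - 10) / 3, 2, by omega⟩
  · exact ⟨(m - 5) / 3, 1, by omega⟩

theorem mem_closure_three_five_iff (m : ℕ) :
    m ∈ AddSubmonoid.closure ({3, 5} : Set ℕ) ↔ ∃ a b : ℕ, m = 3 * a + 5 * b := by
  simp only [AddSubmonoid.mem_closure_pair, smul_eq_mul, eq_comm (a := m), mul_comm]

theorem mem_closure_three_five_iff_ne (m : ℕ) :
    m ∈ AddSubmonoid.closure ({3, 5} : Set ℕ) ↔ m ≠ 1 ∧ m ≠ 2 ∧ m ≠ 4 ∧ m ≠ 7 := by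
  rw [mem_closure_three_five_iff, exists_three_mul_add_five_mul_iff]

theorem setOf_three_mul_add_five_mul_sdiff_three_add :
    {m : ℕ | ∃ a b : ℕ, m = 3 * a + 5 * b} \
      {n : ℕ | ∃ γ ∈ {m : ℕ | ∃ a b : ℕ, m = 3 * a + 5 * b}, n = 3 + γ} = {0, 5, 10} := by
  ext n
  simp only [Set.mem_sdiff, Set.mem_ofPred_eq, Set.mem_insert_iff, Set.mem_singleton_iff,
    exists_three_mul_add_five_mul_iff]
  refine ⟨fun ⟨hn, hshift⟩ => ?_, fun hn => ⟨by omega, fun ⟨γ, hγ, h⟩ => by omega⟩⟩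
  by_contra! h
  exact hshift ⟨n - 3, by omega, by omega⟩

namespace PowerSeries

variable {R : Type*} [CommRing R] {a b : R} {f g h : R⟦X⟧}

theorem X_pow_three_dvd
    (hf : f = g * (X ^ 3 + C a * X ^ 5 + C b * X ^ 10) + h * (X ^ 6 - C (a ^ 2) * X ^ 10)) :
    X ^ 3 ∣ f :=
  hf ▸ dvd_add (dvd_mul_of_dvd_right ⟨1 + C a * X ^ 2 + C b * X ^ 7, by ring⟩ _)
    (dvd_mul_of_dvd_right ⟨X ^ 3 - C (a ^ 2) * X ^ 7, by ring⟩ _)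

theorem coeff_five_eq (hg2 : coeff 2 g = 0)
    (hf : f = g * (X ^ 3 + C a * X ^ 5 + C b * X ^ 10) + h * (X ^ 6 - C (a ^ 2) * X ^ 10)) :
    coeff 5 f = a * coeff 3 f := by
  subst hf
  simp only [mul_add, mul_sub, ← mul_assoc, mul_comm _ (C _), map_add, map_sub, coeff_C_mul,
    coeff_mul_X_pow']
  norm_num [hg2]

theorem coeff_ten_eq (hg1 : coeff 1 g = 0) (hg7 : coeff 7 g = 0) (hh2 : coeff 2 h = 0)
    (hh4 : coeff 4 h = 0)
    (hf : f = g * (X ^ 3 + C a * X ^ 5 + C b * X ^ 10) + h * (X ^ 6 - C (a ^ 2) * X ^ 10)) :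
    coeff 10 f = a * coeff 8 f - a ^ 2 * coeff 6 f + b * coeff 3 f := by
  subst hf
  simp only [mul_add, mul_sub, ← mul_assoc, mul_comm _ (C _), map_add, map_sub, coeff_C_mul,
    coeff_mul_X_pow']
  norm_num [hg1, hg7, hh2, hh4]
  ring

theorem exists_order_eq_three_add
    (hf : f ∈ supportedIn R (AddSubmonoid.closure {3, 5}))
    (hg : g ∈ supportedIn R (AddSubmonoid.closure {3, 5}))
    (hh : h ∈ supportedIn R (AddSubmonoid.closure {3, 5}))
    (hfgh : f = g * (X ^ 3 + C a * X ^ 5 + C b * X ^ 10) + h * (X ^ 6 - C (a ^ 2) * X ^ 10))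
    {n : ℕ} (hn : f.order = n) : ∃ u v : ℕ, n = 3 + (3 * u + 5 * v) := by
  have gap (m : ℕ) (hm : m = 1 ∨ m = 2 ∨ m = 4 ∨ m = 7) :
      m ∉ AddSubmonoid.closure {3, 5} := by
    rw [mem_closure_three_five_iff_ne]; omega
  obtain ⟨hfn, hlow⟩ := order_eq_nat.mp hn
  have h3 : 3 ≤ n := by
    by_contra! hn3
    exact hfn (X_pow_dvd_iff.mp (X_pow_three_dvd hfgh) n hn3)
  have hΓ : n ∈ AddSubmonoid.closure {3, 5} := by
    by_contra hnΓ
    exact hfn (mem_supportedIn.mp hf n hnΓ)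
  have h5 : n ≠ 5 := by
    rintro rfl
    rw [coeff_five_eq (mem_supportedIn.mp hg 2 (gap 2 (by omega))) hfgh, hlow 3 (by omega),
      mul_zero] at hfn
    exact hfn rfl
  have h10 : n ≠ 10 := by
    rintro rfl
    rw [coeff_ten_eq (mem_supportedIn.mp hg 1 (gap 1 (by omega)))
      (mem_supportedIn.mp hg 7 (gap 7 (by omega))) (mem_supportedIn.mp hh 2 (gap 2 (by omega)))
      (mem_supportedIn.mp hh 4 (gap 4 (by omega))) hfgh,
      hlow 3 (by omega), hlow 6 (by omega), hlow 8 (by omega)] at hfn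
    exact hfn (by ring)
  rw [mem_closure_three_five_iff_ne] at hΓ
  obtain ⟨u, v, huv⟩ := (exists_three_mul_add_five_mul_iff (n - 3)).mpr (by omega)
  exact ⟨u, v, by omega⟩

theorem order_X_pow_three_add [Nontrivial R] (a b : R) :
    (X ^ 3 + C a * X ^ 5 + C b * X ^ 10 : R⟦X⟧).order = 3 := by
  refine order_eq_nat.mpr ⟨by simp [coeff_X_pow], fun i hi => ?_⟩
  interval_cases i <;> simp [coeff_X_pow]

theorem order_X_pow_mul_X_pow_three_add [IsDomain R] (a b : R) (m : ℕ) :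
    ((X : R⟦X⟧) ^ m * (X ^ 3 + C a * X ^ 5 + C b * X ^ 10)).order = ((3 + m : ℕ) : ℕ∞) := by
  rw [order_mul, order_X_pow, order_X_pow_three_add, add_comm, Nat.cast_add]
  rfl

end PowerSeries

open PowerSeries

theorem gap_sequence_S33_E8 {k : Type*} [Field k]
    (O : Subalgebra k (PowerSeries k))
    (hO : O = Algebra.adjoin k {(X : PowerSeries k) ^ 3, (X : PowerSeries k) ^ 5})
    (a b : k) (I : Ideal O)
    (hI : ∀ f : O, f ∈ I ↔ ∃ g h : O,
      (f : PowerSeries k) =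
        (g : PowerSeries k) * (X ^ 3 + C a * X ^ 5 + C b * X ^ 10) +
        (h : PowerSeries k) * (X ^ 6 - C (a ^ 2) * X ^ 10)) :
    ({m : ℕ | ∃ a b : ℕ, m = 3 * a + 5 * b} \
      {n : ℕ | ∃ f ∈ I, f ≠ 0 ∧ (f : PowerSeries k).order = n}) = {0, 5, 10} ∧
    {n : ℕ | ∃ f ∈ I, f ≠ 0 ∧ (f : PowerSeries k).order = n} =
      {n : ℕ | ∃ γ ∈ {m : ℕ | ∃ a b : ℕ, m = 3 * a + 5 * b}, n = 3 + γ} := by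
  have hO_le : O ≤ supportedIn k (AddSubmonoid.closure {3, 5}) := by
    rw [hO, ← Set.image_pair]
    exact adjoin_X_pow_le_supportedIn _
  have hX_pow_mem (u v : ℕ) : (X : k⟦X⟧) ^ (3 * u + 5 * v) ∈ O := by
    rw [hO, ← Set.image_pair]
    exact X_pow_mem_adjoin ((mem_closure_three_five_iff _).mpr ⟨u, v, rfl⟩)
  have hF_mem : (X ^ 3 + C a * X ^ 5 + C b * X ^ 10 : k⟦X⟧) ∈ O := by
    rw [← smul_eq_C_mul, ← smul_eq_C_mul]
    exact add_mem (add_mem (hX_pow_mem 1 0) (O.smul_mem (hX_pow_mem 0 1) a))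
      (O.smul_mem (hX_pow_mem 0 2) b)
  have hvalues : {n : ℕ | ∃ f ∈ I, f ≠ 0 ∧ (f : PowerSeries k).order = n} =
      {n : ℕ | ∃ γ ∈ {m : ℕ | ∃ a b : ℕ, m = 3 * a + 5 * b}, n = 3 + γ} := by
    ext n
    constructor
    · rintro ⟨f, hfI, -, hfn⟩
      obtain ⟨g, h, hfgh⟩ := (hI f).mp hfI
      obtain ⟨u, v, rfl⟩ := exists_order_eq_three_add (hO_le f.2) (hO_le g.2) (hO_le h.2) hfgh hfn
      exact ⟨_, ⟨u, v, rfl⟩, rfl⟩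
    · rintro ⟨_, ⟨u, v, rfl⟩, rfl⟩
      have hord := order_X_pow_mul_X_pow_three_add a b (3 * u + 5 * v)
      refine ⟨⟨_, mul_mem (hX_pow_mem u v) hF_mem⟩, (hI _).mpr ⟨⟨_, hX_pow_mem u v⟩, 0, by simp⟩,
        ne_of_apply_ne (fun f : O => (f : k⟦X⟧).order) ?_, hord⟩
      simpa only [ZeroMemClass.coe_zero, order_zero, hord] using ENat.natCast_ne_top _
  exact ⟨hvalues ▸ setOf_three_mul_add_five_mul_sdiff_three_add, hvalues⟩
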